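/- Let $\lambda>1$, $T>0$, $a>0$, $b>0$. Suppose $y\in C^0([0,T))\cap C^1((0,T))$ satisfies $y(t)>0$ for all $t\in[0,T)$, $h\in L^1_{loc}(\mathbb{R})$ satisfies $h\ge 0$ a.e., $\int_{\max(t-1,0)}^t h(s)\,ds\le b$ for all $t\in(0,T)$, and $y'(t)+a y^\lambda(t)\le h(t)y(t)$ for all $t\in(0,T)$. Then $y(t)\le \max\{y(0)e^b,\ (a(\lambda-1))^{-1/(\lambda-1)} e^b\}$ for all $t\in[0,T)$. -/

import Mathlib

/-!
The substitution `w = y ^ (-(λ - 1))` turns the inequality into the linear one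
`w' ≥ (λ - 1) (a - h w)`. With the integrating factor `exp ((λ - 1) ∫ h)` over the window
`[max (t - 1) 0, t]`, whose `h`-mass is at most `b`, this gives
`w t * exp ((λ - 1) b) ≥ w s + a (λ - 1) (t - s)`, which is at least `w 0` when `t ≤ 1` and at
least `a (λ - 1)` otherwise; solving for `y t` gives the two terms of the maximum.
-/

open MeasureTheory Set Real intervalIntegral

lemma monotoneOn_primitive_of_ae_nonneg {h : ℝ → ℝ} {s t : ℝ}
    (hh : IntervalIntegrable h volume s t) (hnn : ∀ᵐ r, 0 ≤ h r) :
    MonotoneOn (fun r => ∫ u in s..r, h u) (uIcc s t) := by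
  intro u hu v hv huv
  have hsv : IntervalIntegrable h volume s v := hh.mono_set (uIcc_subset_uIcc left_mem_uIcc hv)
  have hsu : IntervalIntegrable h volume s u := hh.mono_set (uIcc_subset_uIcc left_mem_uIcc hu)
  have hdiff := intervalIntegral.integral_interval_sub_left hsv hsu
  have hnonneg := intervalIntegral.integral_nonneg_of_ae huv hnn
  dsimp only
  linarith

/-- `H r = ∫ u in s..r, h u` is only differentiable almost everywhere, so the chain rule
`(-exp (-μ H))' = μ h exp (-μ H)` holds only a.e.; since `-exp (-μ H)` is monotone, the integral
of its a.e. derivative is still bounded by its increment, which is the direction needed here. -/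
lemma mul_integral_mul_exp_neg_primitive_le {h : ℝ → ℝ} {s t μ : ℝ} (hst : s ≤ t) (hμ : 0 ≤ μ)
    (hh : IntervalIntegrable h volume s t) (hnn : ∀ᵐ r, 0 ≤ h r) :
    μ * ∫ r in s..t, h r * exp (-(μ * ∫ u in s..r, h u)) ≤
      1 - exp (-(μ * ∫ u in s..t, h u)) := by
  set H := fun r => ∫ u in s..r, h u
  set G := fun r => -exp (-(μ * H r))
  have hG : MonotoneOn G (uIcc s t) := fun u hu v hv huv => by
    have := monotoneOn_primitive_of_ae_nonneg hh hnn hu hv huv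
    simp only [G, neg_le_neg_iff, exp_le_exp]
    nlinarith
  have hderiv : ∀ᵐ x, x ∈ uIoc s t → μ * (h x * exp (-(μ * H x))) = deriv G x := by
    filter_upwards [hh.ae_hasDerivAt_integral] with x hx hxI
    have hHx : HasDerivAt H (h x) x := hx (uIoc_subset_uIcc hxI) s left_mem_uIcc
    have hGx : HasDerivAt G (μ * (h x * exp (-(μ * H x)))) x :=
      ((hHx.const_mul μ).fun_neg.exp).fun_neg.congr_deriv (by ring)
    exact hGx.deriv.symm
  have hmem := hG.intervalIntegral_deriv_mem_uIcc
  rw [uIcc_of_le (sub_nonneg.2 (hG left_mem_uIcc right_mem_uIcc hst))] at hmem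
  rw [← intervalIntegral.integral_const_mul, intervalIntegral.integral_congr_ae hderiv]
  refine hmem.2.trans_eq ?_
  simp [G, H]
  ring

lemma le_mul_exp_integral_of_neg_mul_le_deriv {w w' h : ℝ → ℝ} {s t μ : ℝ} (hst : s ≤ t)
    (hw : ContinuousOn w (Icc s t)) (hw' : ∀ x ∈ Ioo s t, HasDerivAt w (w' x) x)
    (hpos : ∀ x ∈ Icc s t, 0 < w x) (hh : IntegrableOn h (Icc s t))
    (hineq : ∀ x ∈ Ioo s t, -(μ * h x * w x) ≤ w' x) :
    w s ≤ w t * exp (μ * ∫ r in s..t, h r) := by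
  have hlog : -log (w t) - -log (w s) ≤ ∫ r in s..t, μ * h r := by
    refine sub_le_integral_of_hasDeriv_right_of_le hst (g' := fun x => -(w' x / w x))
      (hw.log fun x hx => (hpos x hx).ne').neg
      (fun x hx => ((hw' x hx).log (hpos x (Ioo_subset_Icc_self hx)).ne').neg.hasDerivWithinAt)
      (hh.const_mul μ) fun x hx => ?_
    have hwx := hpos x (Ioo_subset_Icc_self hx)
    rw [neg_le, le_div_iff₀ hwx]
    linarith [hineq x hx]
  rw [intervalIntegral.integral_const_mul] at hlog
  calc w s = exp (log (w s)) := (exp_log (hpos s (left_mem_Icc.2 hst))).symm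
    _ ≤ exp (log (w t) + μ * ∫ r in s..t, h r) := exp_le_exp.2 (by linarith)
    _ = w t * exp (μ * ∫ r in s..t, h r) := by
      rw [exp_add, exp_log (hpos t (right_mem_Icc.2 hst))]

/-- The integrating factor `exp (μ ∫ h)` need not be differentiable, so `w' ≥ c - μ h w` is
integrated as it stands and `∫ h w` is then bounded through
`w x ≤ w t * exp (μ ∫ u in x..t, h u)`. -/
lemma le_mul_exp_integral_of_sub_mul_le_deriv {w w' h : ℝ → ℝ} {s t c μ : ℝ} (hst : s ≤ t)
    (hc : 0 ≤ c) (hμ : 0 ≤ μ) (hw : ContinuousOn w (Icc s t))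
    (hw' : ∀ x ∈ Ioo s t, HasDerivAt w (w' x) x) (hpos : ∀ x ∈ Icc s t, 0 < w x)
    (hh : IntegrableOn h (Icc s t)) (hnn : ∀ᵐ r, 0 ≤ h r)
    (hineq : ∀ x ∈ Ioo s t, c - μ * h x * w x ≤ w' x) :
    w s + c * (t - s) ≤ w t * exp (μ * ∫ r in s..t, h r) := by
  set H := fun r => ∫ u in s..r, h u
  have hII {f : ℝ → ℝ} : IntegrableOn f (Icc s t) → IntervalIntegrable f volume s t :=
    (intervalIntegrable_iff_integrableOn_Icc_of_le hst).2
  have hhi := hII hh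
  have hHcont : ContinuousOn H (Icc s t) := by
    simpa [uIcc_of_le hst] using continuousOn_primitive_interval (μ := volume) (a := s) (b := t)
      (by rwa [uIcc_of_le hst])
  have hbound : ∀ x ∈ Icc s t, w x ≤ w t * exp (μ * H t) * exp (-(μ * H x)) := by
    intro x hx
    have hsub : Icc x t ⊆ Icc s t := Icc_subset_Icc_left hx.1
    have hxt := le_mul_exp_integral_of_neg_mul_le_deriv hx.2 (hw.mono hsub)
      (fun y hy => hw' y (Ioo_subset_Ioo_left hx.1 hy)) (fun y hy => hpos y (hsub hy))
      (hh.mono_set hsub) fun y hy => by linarith [hineq y (Ioo_subset_Ioo_left hx.1 hy)]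
    rw [← integral_interval_sub_left hhi (hhi.mono_set (uIcc_subset_uIcc left_mem_uIcc
      (by rwa [uIcc_of_le hst])))] at hxt
    calc w x ≤ w t * exp (μ * (H t - H x)) := hxt
      _ = w t * exp (μ * H t) * exp (-(μ * H x)) := by
        rw [mul_sub, sub_eq_add_neg, exp_add, mul_assoc]
  have hw_int : IntegrableOn (fun r => h r * w r) (Icc s t) :=
    hh.mul_continuousOn hw isCompact_Icc
  have hexp_int : IntegrableOn (fun r => h r * exp (-(μ * H r))) (Icc s t) :=
    hh.mul_continuousOn (continuous_exp.comp_continuousOn (hHcont.const_smul μ).neg)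
      isCompact_Icc
  have hlin : -w t - -w s ≤ ∫ r in s..t, (μ * (h r * w r) - c) :=
    sub_le_integral_of_hasDeriv_right_of_le hst hw.neg
      (fun x hx => (hw' x hx).neg.hasDerivWithinAt)
      ((hw_int.const_mul μ).sub (integrableOn_const measure_Icc_lt_top.ne))
      fun x hx => by linarith [hineq x hx]
  rw [intervalIntegral.integral_sub (hII (hw_int.const_mul μ)) intervalIntegrable_const,
    intervalIntegral.integral_const_mul, intervalIntegral.integral_const, smul_eq_mul] at hlin
  have hHt_nonneg : 0 ≤ H t := integral_nonneg_of_ae hst hnn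
  have hint : μ * ∫ r in s..t, h r * w r ≤ w t * (exp (μ * H t) - 1) := calc
    μ * ∫ r in s..t, h r * w r
        ≤ μ * ∫ r in s..t, w t * exp (μ * H t) * (h r * exp (-(μ * H r))) := by
      gcongr
      refine integral_mono_ae_restrict hst (hII hw_int) (hII (hexp_int.const_mul _)) ?_
      filter_upwards [ae_restrict_of_ae hnn, ae_restrict_mem measurableSet_Icc] with x hx hxI
      calc h x * w x ≤ h x * (w t * exp (μ * H t) * exp (-(μ * H x))) :=
            mul_le_mul_of_nonneg_left (hbound x hxI) hx
        _ = _ := by ring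
    _ = w t * exp (μ * H t) * (μ * ∫ r in s..t, h r * exp (-(μ * H r))) := by
      rw [intervalIntegral.integral_const_mul]
      ring
    _ ≤ w t * exp (μ * H t) * (1 - exp (-(μ * H t))) := by
      have := hpos t (right_mem_Icc.2 hst)
      gcongr
      exact mul_integral_mul_exp_neg_primitive_le hst hμ hhi hnn
    _ = w t * (exp (μ * H t) - 1) := by
      rw [mul_assoc, mul_sub, ← exp_add, add_neg_cancel, exp_zero, mul_one]
  have := hpos s (left_mem_Icc.2 hst)
  linarith

lemma sub_mul_rpow_neg_le_of_add_mul_rpow_le {lam a k y y' : ℝ} (hlam : 1 < lam) (hy : 0 < y)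
    (hode : y' + a * y ^ lam ≤ k * y) :
    a * (lam - 1) - (lam - 1) * k * y ^ (-(lam - 1)) ≤ y' * -(lam - 1) * y ^ (-(lam - 1) - 1) := by
  have hscale : 0 ≤ (lam - 1) * y ^ (-lam) :=
    mul_nonneg (sub_nonneg.2 hlam.le) (rpow_nonneg hy.le _)
  have hy1 : y ^ (-lam) * y = y ^ (-(lam - 1)) := by
    rw [← rpow_add_one hy.ne']
    ring_nf
  have hylam : y ^ (-lam) * y ^ lam = 1 := by
    rw [← rpow_add hy, neg_add_cancel, rpow_zero]
  have hscaled := mul_le_mul_of_nonneg_left hode hscale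
  rw [show -(lam - 1) - 1 = -lam by ring]
  linear_combination hscaled - (lam - 1) * a * hylam + (lam - 1) * k * hy1

lemma rpow_neg_add_le_rpow_neg_mul_exp_integral {lam a s t : ℝ} {y y' h : ℝ → ℝ} (hlam : 1 < lam)
    (ha : 0 ≤ a) (hst : s ≤ t) (hy : ContinuousOn y (Icc s t))
    (hy' : ∀ x ∈ Ioo s t, HasDerivAt y (y' x) x) (hpos : ∀ x ∈ Icc s t, 0 < y x)
    (hh : IntegrableOn h (Icc s t)) (hnn : ∀ᵐ r, 0 ≤ h r)
    (hode : ∀ x ∈ Ioo s t, y' x + a * y x ^ lam ≤ h x * y x) :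
    y s ^ (-(lam - 1)) + a * (lam - 1) * (t - s) ≤
      y t ^ (-(lam - 1)) * exp ((lam - 1) * ∫ r in s..t, h r) :=
  have hm : 0 < lam - 1 := sub_pos.2 hlam
  le_mul_exp_integral_of_sub_mul_le_deriv hst (mul_nonneg ha hm.le) hm.le
    (hy.rpow_const fun x hx => Or.inl (hpos x hx).ne')
    (fun x hx => (hy' x hx).rpow_const (Or.inl (hpos x (Ioo_subset_Icc_self hx)).ne'))
    (fun x hx => rpow_pos_of_pos (hpos x hx) _) hh hnn
    fun x hx => sub_mul_rpow_neg_le_of_add_mul_rpow_le hlam (hpos x (Ioo_subset_Icc_self hx))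
      (hode x hx)

lemma le_mul_exp_of_rpow_neg_le {m b y c : ℝ} (hm : 0 < m) (hy : 0 < y) (hc : 0 < c)
    (h : c ^ (-m) ≤ y ^ (-m) * exp (m * b)) : y ≤ c * exp b := by
  have hyb : y ^ (-m) * exp (m * b) = (y * exp (-b)) ^ (-m) := by
    rw [mul_rpow hy.le (exp_pos _).le, ← exp_mul]
    ring_nf
  rw [hyb, rpow_le_rpow_iff_of_neg hc (by positivity) (by linarith)] at h
  calc y = y * exp (-b) * exp b := by rw [mul_assoc, ← exp_add, neg_add_cancel, exp_zero, mul_one]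
    _ ≤ c * exp b := by gcongr

theorem stmt_1_general (lam T a b : ℝ) (hlam : 1 < lam) (ha : 0 < a) (hb : 0 < b)
    (y y' h : ℝ → ℝ)
    (hycont : ContinuousOn y (Ico 0 T))
    (hyderiv : ∀ t ∈ Ioo 0 T, HasDerivAt y (y' t) t)
    (hypos : ∀ t ∈ Ico 0 T, 0 < y t)
    (hloc : LocallyIntegrable h volume)
    (hnn : ∀ᵐ s, 0 ≤ h s)
    (hwin : ∀ t ∈ Ioo 0 T, ∫ s in Ioc (max (t - 1) 0) t, h s ≤ b)
    (hode : ∀ t ∈ Ioo 0 T, y' t + a * (y t) ^ lam ≤ h t * y t) :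
    ∀ t ∈ Ico 0 T, y t ≤ max (y 0 * Real.exp b) ((a * (lam - 1)) ^ (-(1 / (lam - 1))) * Real.exp b) := by
  intro t ht
  have hm : 0 < lam - 1 := sub_pos.2 hlam
  set s := max (t - 1) 0 with hs
  have hst : s ≤ t := max_le (by linarith) ht.1
  have hIcc : Icc s t ⊆ Ico 0 T := fun x hx => ⟨(le_max_right _ _).trans hx.1, hx.2.trans_lt ht.2⟩
  have hIoo : Ioo s t ⊆ Ioo 0 T := fun x hx => ⟨(le_max_right _ _).trans_lt hx.1, hx.2.trans ht.2⟩
  have hint_le : ∫ r in s..t, h r ≤ b := by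
    rcases ht.1.eq_or_lt with rfl | ht0
    · simpa [hs] using hb.le
    · rw [intervalIntegral.integral_of_le hst]
      exact hwin t ⟨ht0, ht.2⟩
  have hwindow : y s ^ (-(lam - 1)) + a * (lam - 1) * (t - s)
      ≤ y t ^ (-(lam - 1)) * exp ((lam - 1) * b) := by
    refine (rpow_neg_add_le_rpow_neg_mul_exp_integral hlam ha.le hst (hycont.mono hIcc)
      (fun x hx => hyderiv x (hIoo hx)) (fun x hx => hypos x (hIcc hx))
      (hloc.integrableOn_isCompact isCompact_Icc) hnn fun x hx => hode x (hIoo hx)).trans ?_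
    have := hypos t ht
    gcongr
  rcases le_total t 1 with ht1 | ht1
  · have hs0 : s = 0 := max_eq_right (by linarith)
    have hy0 : 0 < y 0 := hs0 ▸ hypos s (hIcc (left_mem_Icc.2 hst))
    refine le_max_of_le_left (le_mul_exp_of_rpow_neg_le hm (hypos t ht) hy0 ?_)
    rw [hs0, sub_zero] at hwindow
    nlinarith [mul_nonneg (mul_nonneg ha.le hm.le) ht.1]
  · have hts : t - s = 1 := by rw [hs, max_eq_left (by linarith : 0 ≤ t - 1)]; ring
    refine le_max_of_le_right (le_mul_exp_of_rpow_neg_le hm (hypos t ht) (by positivity) ?_)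
    rw [← rpow_mul (by positivity), show -(1 / (lam - 1)) * -(lam - 1) = 1 by field_simp,
      rpow_one]
    have hys := rpow_pos_of_pos (hypos s (hIcc (left_mem_Icc.2 hst))) (-(lam - 1))
    rw [hts, mul_one] at hwindow
    linarith

theorem stmt_1 (lam T a b : ℝ) (hlam : 1 < lam) (hT : 0 < T) (ha : 0 < a) (hb : 0 < b)
    (y y' h : ℝ → ℝ)
    (hycont : ContinuousOn y (Ico 0 T))
    (hyderiv : ∀ t ∈ Ioo 0 T, HasDerivAt y (y' t) t)
    (hypos : ∀ t ∈ Ico 0 T, 0 < y t)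
    (hloc : LocallyIntegrable h volume)
    (hnn : ∀ᵐ s, 0 ≤ h s)
    (hwin : ∀ t ∈ Ioo 0 T, ∫ s in Ioc (max (t - 1) 0) t, h s ≤ b)
    (hode : ∀ t ∈ Ioo 0 T, y' t + a * (y t) ^ lam ≤ h t * y t) :
    ∀ t ∈ Ico 0 T, y t ≤ max (y 0 * Real.exp b) ((a * (lam - 1)) ^ (-(1 / (lam - 1))) * Real.exp b) :=
  stmt_1_general lam T a b hlam ha hb y y' h hycont hyderiv hypos hloc hnn hwin hode
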